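/- Let ρ = |0⟩⟨0|_A ⊗ (1/2^b) I_B on a+b qubits with partition into C and D, |D| = d > a, and let H_D be a γ-gapped Hamiltonian on D with β > (d ln 2 + ln 3)/γ. For any unitary U, the probability that measuring C leaves D in the Gibbs state G_β(H_D) is at most 2^{a−d+1}. -/

import Mathlib

open Matrix BigOperators Kronecker
open scoped Classical ComplexOrder

noncomputable section

def ptraceFst {C D : Type*} [Fintype C] (σ : Matrix (C × D) (C × D) ℂ) :
    Matrix D D ℂ := Matrix.of fun y y' => ∑ j : C, σ (j, y) (j, y')

def ptraceSnd {C D : Type*} [Fintype D] (σ : Matrix (C × D) (C × D) ℂ) :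
    Matrix C C ℂ := Matrix.of fun x x' => ∑ j : D, σ (x, j) (x', j)

def posSemidefSqrtOld {n : Type*} [Fintype n] [DecidableEq n] {A : Matrix n n ℂ}
    (hA : A.PosSemidef) : Matrix n n ℂ :=
  (hA.1.eigenvectorUnitary : Matrix n n ℂ) *
    diagonal ((fun x : ℝ => (x : ℂ)) ∘ (hA.1.eigenvalues · |>.sqrt)) *
  (star hA.1.eigenvectorUnitary : Matrix n n ℂ)

def traceNorm {n : Type*} [Fintype n] [DecidableEq n] (M : Matrix n n ℂ) : ℝ :=
  (posSemidefSqrtOld (Matrix.posSemidef_conjTranspose_mul_self M)).trace.re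

def traceDist {n : Type*} [Fintype n] [DecidableEq n] (σ σ' : Matrix n n ℂ) : ℝ :=
  traceNorm (σ - σ') / 2

def IsDensity {n : Type*} [Fintype n] (M : Matrix n n ℂ) : Prop :=
  M.PosSemidef ∧ M.trace = 1

def IsPure {n : Type*} [Fintype n] (σ : Matrix n n ℂ) : Prop :=
  ∃ ψ : n → ℂ, (∑ i, Complex.normSq (ψ i)) = 1 ∧ σ = Matrix.vecMulVec ψ (star ψ)

def inputState (a b : ℕ) :
    Matrix (Fin (2^a) × Fin (2^b)) (Fin (2^a) × Fin (2^b)) ℂ :=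
  (Matrix.single 0 0 1) ⊗ₖ (((2:ℂ)^b)⁻¹ • (1 : Matrix (Fin (2^b)) (Fin (2^b)) ℂ))

def measSub {C D : Type*} [Fintype C] [Fintype D] (σ : Matrix (C × D) (C × D) ℂ) (j : C) :
    Matrix D D ℂ := Matrix.of fun y y' => σ (j, y) (j, y')

def measProb {C D : Type*} [Fintype C] [Fintype D] (σ : Matrix (C × D) (C × D) ℂ) (j : C) : ℝ :=
  ((measSub σ j).trace).re

def gibbs {n : Type*} [Fintype n] [DecidableEq n] (β : ℝ) {H : Matrix n n ℂ}
    (hH : H.IsHermitian) : Matrix n n ℂ :=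
  ((hH.cfc (fun x => Real.exp (-β * x))).trace)⁻¹ • hH.cfc (fun x => Real.exp (-β * x))

def vNEntropy {n : Type*} [Fintype n] [DecidableEq n] (M : Matrix n n ℂ) : ℝ :=
  if h : M.IsHermitian then -∑ i, (h.eigenvalues i) * Real.logb 2 (h.eigenvalues i) else 0

def iterState (n : ℕ) (U : ℕ → Matrix (Fin 2 × Fin (2^n)) (Fin 2 × Fin (2^n)) ℂ) :
    ℕ → Matrix (Fin (2^n)) (Fin (2^n)) ℂ
  | 0 => ((2:ℂ)^n)⁻¹ • 1
  | k+1 => ptraceFst (U k * ((Matrix.single 0 0 1) ⊗ₖ iterState n U k) * (U k)ᴴ)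

/-!
The input state is bounded by `2⁻ᵇ • 1` in the Loewner order, and this bound survives the
unitary conjugation and the restriction to each block `measSub σ j` of the measurement of `C`.
If a block equals `pⱼ • G_β(H)`, evaluating it on a unit ground-state vector `w` of `H` gives
`pⱼ ⟪w, G_β(H) w⟫ ≤ 2⁻ᵇ`, and the gap together with the lower bound on `β` makes
`⟪w, G_β(H) w⟫ ≥ 3/4`. Summing over the `2ᶜ` outcomes gives at most
`(4/3) 2ᶜ⁻ᵇ = (4/3) 2ᵃ⁻ᵈ`.
-/

open scoped MatrixOrder

namespace Matrix

section LoewnerOrder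

variable {𝕜 : Type*} [RCLike 𝕜] {m n : Type*}

lemma single_one_le_one [DecidableEq n] (i : n) : single i i (1 : 𝕜) ≤ 1 := by
  rw [le_iff, ← diagonal_single, ← diagonal_one, diagonal_sub, posSemidef_diagonal_iff]
  intro k
  rcases eq_or_ne k i with rfl | hk <;> simp [*]

lemma kronecker_le_one_kronecker [Finite m] [Finite n] [DecidableEq m] {P : Matrix m m 𝕜}
    (hP : P ≤ 1) {B : Matrix n n 𝕜} (hB : 0 ≤ B) : P ⊗ₖ B ≤ 1 ⊗ₖ B := by
  have hsub : 1 ⊗ₖ B - P ⊗ₖ B = (1 - P) ⊗ₖ B := by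
    rw [sub_eq_iff_eq_add, ← add_kronecker, sub_add_cancel]
  rw [le_iff, hsub]
  exact (le_iff.mp hP).kronecker hB.posSemidef

lemma submatrix_le_smul_one [DecidableEq m] [DecidableEq n] {A : Matrix m m 𝕜} {c : 𝕜}
    (hA : A ≤ c • 1) {f : n → m} (hf : Function.Injective f) : A.submatrix f f ≤ c • 1 := by
  rw [le_iff] at hA ⊢
  simpa [submatrix_sub, submatrix_smul, submatrix_one _ hf] using hA.submatrix f

lemma conj_le_smul_one_of_mem_unitaryGroup [Fintype n] [DecidableEq n] {A U : Matrix n n 𝕜}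
    {c : 𝕜} (hA : A ≤ c • 1) (hU : U ∈ unitaryGroup n 𝕜) : U * A * Uᴴ ≤ c • 1 := by
  have h := star_right_conjugate_le_conjugate hA U
  rwa [mul_smul_comm, mul_one, smul_mul_assoc, Unitary.mul_star_self_of_mem hU] at h

lemma re_dotProduct_mulVec_le_of_le_smul_one [Fintype n] [DecidableEq n] {A : Matrix n n 𝕜}
    {t : ℝ} (hA : A ≤ (t : 𝕜) • 1) {w : n → 𝕜} (hw : star w ⬝ᵥ w = 1) :
    RCLike.re (star w ⬝ᵥ A *ᵥ w) ≤ t := by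
  have h := (le_iff.mp hA).dotProduct_mulVec_nonneg w
  rw [sub_mulVec, dotProduct_sub, smul_mulVec, one_mulVec, dotProduct_smul, hw, smul_eq_mul,
    mul_one] at h
  simpa using (RCLike.nonneg_iff.mp h).1

end LoewnerOrder

namespace IsHermitian

variable {𝕜 : Type*} [RCLike 𝕜] {n : Type*} [Fintype n] [DecidableEq n] {A : Matrix n n 𝕜}
  (hA : A.IsHermitian)
include hA

lemma star_eigenvectorBasis_dotProduct_self (i : n) :
    star ⇑(hA.eigenvectorBasis i) ⬝ᵥ ⇑(hA.eigenvectorBasis i) = 1 := by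
  rw [dotProduct_comm, ← EuclideanSpace.inner_eq_star_dotProduct, inner_self_eq_norm_sq_to_K,
    hA.eigenvectorBasis.orthonormal.1 i]
  simp

lemma cfc_mulVec_eigenvectorBasis (f : ℝ → ℝ) (i : n) :
    hA.cfc f *ᵥ ⇑(hA.eigenvectorBasis i)
      = (f (hA.eigenvalues i) : 𝕜) • ⇑(hA.eigenvectorBasis i) := by
  rw [IsHermitian.cfc, Unitary.conjStarAlgAut_apply, ← mulVec_mulVec, ← mulVec_mulVec,
    hA.star_eigenvectorUnitary_mulVec i, diagonal_mulVec_single, ← smul_eq_mul, Pi.single_smul',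
    mulVec_smul, hA.eigenvectorUnitary_mulVec]
  rfl

lemma trace_cfc (f : ℝ → ℝ) : (hA.cfc f).trace = ∑ i, (f (hA.eigenvalues i) : 𝕜) := by
  rw [IsHermitian.cfc, Unitary.conjStarAlgAut_apply, trace_mul_cycle, Unitary.coe_star_mul_self,
    one_mul, trace_diagonal]
  rfl

end IsHermitian

end Matrix

lemma re_dotProduct_gibbs_mulVec_eigenvectorBasis {n : Type*} [Fintype n] [DecidableEq n]
    (β : ℝ) {H : Matrix n n ℂ} (hH : H.IsHermitian) (i : n) :
    (star ⇑(hH.eigenvectorBasis i) ⬝ᵥ gibbs β hH *ᵥ ⇑(hH.eigenvectorBasis i)).re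
      = Real.exp (-β * hH.eigenvalues i) / ∑ k, Real.exp (-β * hH.eigenvalues k) := by
  rw [gibbs, hH.trace_cfc, smul_mulVec, hH.cfc_mulVec_eigenvectorBasis, dotProduct_smul,
    dotProduct_smul, hH.star_eigenvectorBasis_dotProduct_self, RCLike.ofReal_eq_complex_ofReal,
    ← Complex.ofReal_sum]
  simp only [smul_eq_mul, mul_one, ← Complex.ofReal_inv, ← Complex.ofReal_mul, Complex.ofReal_re]
  ring

lemma inputState_le (a b : ℕ) : inputState a b ≤ (((2 ^ b)⁻¹ : ℝ) : ℂ) • 1 := by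
  have hc : (0 : Matrix (Fin (2 ^ b)) (Fin (2 ^ b)) ℂ) ≤ ((2 : ℂ) ^ b)⁻¹ • 1 :=
    (PosSemidef.one.smul (by positivity)).nonneg
  calc inputState a b ≤ 1 ⊗ₖ (((2 : ℂ) ^ b)⁻¹ • 1) :=
        kronecker_le_one_kronecker (single_one_le_one 0) hc
    _ = _ := by push_cast; rw [kronecker_smul, one_kronecker_one]

section Measurement

variable {C D : Type*} [Fintype C] [Fintype D] [DecidableEq C] [DecidableEq D]
  {σ : Matrix (C × D) (C × D) ℂ} {t : ℝ}

lemma measSub_le_smul_one (hσ : σ ≤ (t : ℂ) • 1) (j : C) : measSub σ j ≤ (t : ℂ) • 1 :=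
  submatrix_le_smul_one hσ (Prod.mk_right_injective j)

lemma measProb_mul_le_of_measSub_eq_smul (hσ : σ ≤ (t : ℂ) • 1) {ρ : Matrix D D ℂ} {j : C}
    (h : measSub σ j = (measProb σ j : ℂ) • ρ) {w : D → ℂ} (hw : star w ⬝ᵥ w = 1) :
    measProb σ j * (star w ⬝ᵥ ρ *ᵥ w).re ≤ t := by
  have hle := re_dotProduct_mulVec_le_of_le_smul_one (measSub_le_smul_one hσ j) hw
  rwa [h, smul_mulVec, dotProduct_smul, smul_eq_mul, RCLike.re_to_complex,
    Complex.re_ofReal_mul] at hle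

lemma sum_ite_measSub_eq_smul_le (ht : 0 ≤ t) (hσ : σ ≤ (t : ℂ) • 1) (ρ : Matrix D D ℂ)
    {w : D → ℂ} (hw : star w ⬝ᵥ w = 1) (hρw : 0 < (star w ⬝ᵥ ρ *ᵥ w).re) :
    ∑ j, (if measSub σ j = (measProb σ j : ℂ) • ρ then measProb σ j else 0)
      ≤ Fintype.card C * (t / (star w ⬝ᵥ ρ *ᵥ w).re) := by
  rw [← nsmul_eq_mul]
  refine Finset.sum_le_card_nsmul _ _ _ fun j _ => ?_
  split_ifs with h
  · exact (le_div_iff₀ hρw).mpr (measProb_mul_le_of_measSub_eq_smul hσ h hw)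
  · positivity

end Measurement

lemma sum_exp_le_of_gap {ι : Type*} [Fintype ι] {lam : ι → ℝ} {i₀ : ι}
    {β γ : ℝ} (hβ : 0 ≤ β) (hgap : ∀ i, i ≠ i₀ → lam i₀ + γ ≤ lam i) :
    ∑ i, Real.exp (-β * lam i)
      ≤ (1 + Fintype.card ι * Real.exp (-(β * γ))) * Real.exp (-β * lam i₀) := by
  have hterm (i : ι) : Real.exp (-β * lam i) ≤ (if i = i₀ then Real.exp (-β * lam i₀) else 0)
      + Real.exp (-(β * γ)) * Real.exp (-β * lam i₀) := by
    split_ifs with hi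
    · subst hi; linarith [mul_pos (Real.exp_pos (-(β * γ))) (Real.exp_pos (-β * lam i))]
    · rw [zero_add, ← Real.exp_add, Real.exp_le_exp]
      nlinarith [hgap i hi]
  calc _ ≤ _ := Finset.sum_le_sum fun i _ => hterm i
    _ = _ := by
      rw [Finset.sum_add_distrib, Finset.sum_ite_eq', Finset.sum_const, nsmul_eq_mul,
        if_pos (Finset.mem_univ _), Finset.card_univ]
      ring

lemma inv_one_add_card_mul_exp_le_exp_div_sum_exp {ι : Type*} [Fintype ι]
    {lam : ι → ℝ} {i₀ : ι} {β γ : ℝ} (hβ : 0 ≤ β) (hgap : ∀ i, i ≠ i₀ → lam i₀ + γ ≤ lam i) :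
    (1 + Fintype.card ι * Real.exp (-(β * γ)))⁻¹
      ≤ Real.exp (-β * lam i₀) / ∑ i, Real.exp (-β * lam i) := by
  have hsum : 0 < ∑ i, Real.exp (-β * lam i) :=
    Finset.sum_pos (fun i _ => Real.exp_pos _) ⟨i₀, Finset.mem_univ _⟩
  rw [le_div_iff₀ hsum, inv_mul_le_iff₀ (by positivity)]
  exact sum_exp_le_of_gap hβ hgap

lemma two_pow_mul_exp_neg_le {d : ℕ} {β γ : ℝ} (hγ : 0 < γ)
    (hβ : (d * Real.log 2 + Real.log 3) / γ < β) : 2 ^ d * Real.exp (-(β * γ)) ≤ 1 / 3 := by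
  have hexp : (2 : ℝ) ^ d * 3 = Real.exp (d * Real.log 2 + Real.log 3) := by
    rw [Real.exp_add, Real.exp_nat_mul, Real.exp_log two_pos, Real.exp_log three_pos]
  have hlt : d * Real.log 2 + Real.log 3 < β * γ := (div_lt_iff₀ hγ).mp hβ
  have hle : (2 : ℝ) ^ d * 3 * Real.exp (-(β * γ)) ≤ 1 := by
    rw [hexp, ← Real.exp_add, Real.exp_le_one_iff]
    linarith
  linarith

theorem stmt14_general (a b c d : ℕ) (hn : a + b = c + d) (γ β : ℝ) (hγ : 0 < γ)
    (H : Matrix (Fin (2^d)) (Fin (2^d)) ℂ) (hH : H.IsHermitian)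
    (hgapped : ∃ i₀, (∀ i, hH.eigenvalues i₀ ≤ hH.eigenvalues i) ∧
        ∀ i, i ≠ i₀ → hH.eigenvalues i₀ + γ ≤ hH.eigenvalues i)
    (hβ : β > (d * Real.log 2 + Real.log 3) / γ)
    (e : (Fin (2^a) × Fin (2^b)) ≃ (Fin (2^c) × Fin (2^d)))
    (U : Matrix (Fin (2^c) × Fin (2^d)) (Fin (2^c) × Fin (2^d)) ℂ)
    (hU : U ∈ Matrix.unitaryGroup (Fin (2^c) × Fin (2^d)) ℂ) :
    (∑ j : Fin (2^c),
        if measSub (U * (Matrix.reindex e e (inputState a b)) * Uᴴ) j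
            = (measProb (U * (Matrix.reindex e e (inputState a b)) * Uᴴ) j : ℂ) • gibbs β hH
          then measProb (U * (Matrix.reindex e e (inputState a b)) * Uᴴ) j else 0)
      ≤ (2:ℝ)^((a:ℤ) - d + 1) := by
  obtain ⟨i₀, -, hgap⟩ := hgapped
  have hσ := conj_le_smul_one_of_mem_unitaryGroup
    (submatrix_le_smul_one (inputState_le a b) e.symm.injective) hU
  have hβ0 : 0 ≤ β := le_trans (by positivity) hβ.le
  have hweight : 3 / 4 ≤ (star ⇑(hH.eigenvectorBasis i₀) ⬝ᵥ gibbs β hH *ᵥ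
      ⇑(hH.eigenvectorBasis i₀)).re := by
    rw [re_dotProduct_gibbs_mulVec_eigenvectorBasis]
    refine le_trans ?_ (inv_one_add_card_mul_exp_le_exp_div_sum_exp hβ0 hgap)
    rw [Fintype.card_fin, Nat.cast_pow, Nat.cast_ofNat]
    have hsmall := two_pow_mul_exp_neg_le hγ hβ
    rw [le_inv_comm₀ (by norm_num) (by positivity)]
    linarith
  calc _ ≤ _ := sum_ite_measSub_eq_smul_le (by positivity) hσ (gibbs β hH)
          (hH.star_eigenvectorBasis_dotProduct_self i₀) (by linarith)
    _ ≤ 2 ^ c * (((2 : ℝ) ^ b)⁻¹ / (3 / 4)) := by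
      rw [Fintype.card_fin, Nat.cast_pow, Nat.cast_ofNat]
      gcongr
    _ ≤ (2 : ℝ) ^ ((a : ℤ) - d + 1) := by
      have hpow : (2 : ℝ) ^ a * 2 ^ b = 2 ^ c * 2 ^ d := by rw [← pow_add, ← pow_add, hn]
      rw [zpow_add₀ two_ne_zero, zpow_sub₀ two_ne_zero, zpow_natCast, zpow_natCast, zpow_one,
        div_mul_eq_mul_div, le_div_iff₀ (by positivity)]
      field_simp
      nlinarith [pow_pos (two_pos : (0 : ℝ) < 2) a, pow_pos (two_pos : (0 : ℝ) < 2) b]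

theorem stmt14 (a b c d : ℕ) (hn : a + b = c + d) (hd : a < d) (γ β : ℝ) (hγ : 0 < γ)
    (H : Matrix (Fin (2^d)) (Fin (2^d)) ℂ) (hH : H.IsHermitian)
    (hgapped : ∃ i₀, (∀ i, hH.eigenvalues i₀ ≤ hH.eigenvalues i) ∧
        ∀ i, i ≠ i₀ → hH.eigenvalues i₀ + γ ≤ hH.eigenvalues i)
    (hβ : β > (d * Real.log 2 + Real.log 3) / γ)
    (e : (Fin (2^a) × Fin (2^b)) ≃ (Fin (2^c) × Fin (2^d)))
    (U : Matrix (Fin (2^c) × Fin (2^d)) (Fin (2^c) × Fin (2^d)) ℂ)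
    (hU : U ∈ Matrix.unitaryGroup (Fin (2^c) × Fin (2^d)) ℂ) :
    (∑ j : Fin (2^c),
        if measSub (U * (Matrix.reindex e e (inputState a b)) * Uᴴ) j
            = (measProb (U * (Matrix.reindex e e (inputState a b)) * Uᴴ) j : ℂ) • gibbs β hH
          then measProb (U * (Matrix.reindex e e (inputState a b)) * Uᴴ) j else 0)
      ≤ (2:ℝ)^((a:ℤ) - d + 1) :=
  stmt14_general a b c d hn γ β hγ H hH hgapped hβ e U hU
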